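/- arXiv:2003.04695 — 2 statements merged into one kernel-verified Lean document; each statement's English description precedes it below -/
import Mathlib

section
/- Define the strong H∞ norm of Tₐ at delays τ ∈ (ℝ₊)^m as ⦀Tₐ(τ)⦀∞ := lim_{ε→0⁺} sup { ‖Tₐ(·, τ_ε)‖∞ : τ_ε ∈ B(τ,ε) ∩ (ℝ⁺)^m }, where ‖Tₐ(·,r)‖∞ = sup_ω σ₁(Tₐ(iω, r)). Then ⦀Tₐ(τ)⦀∞ = max_{θ ∈ [0,2π]^m} σ₁(𝕋ₐ(θ)); in particular the strong H∞ norm of Tₐ is independent of the delay values τ. -/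
open Matrix Complex Filter Topology

/-- The largest singular value (Euclidean operator norm) of a complex matrix. -/
noncomputable def sigma1 {q p : ℕ} (M : Matrix (Fin q) (Fin p) ℂ) : ℝ :=
  ‖LinearMap.toContinuousLinearMap (Matrix.toEuclideanLin M)‖

/-- `𝕋ₐ(θ) = C₂ (−A₀^{(22)} − ∑ᵢ Aᵢ^{(22)} e^{−iθᵢ})⁻¹ B₂`. -/
noncomputable def asymTF {m p q : ℕ}
    (A0 : Matrix (Fin m) (Fin m) ℝ) (A : Fin m → Matrix (Fin m) (Fin m) ℝ)
    (B2 : Matrix (Fin m) (Fin p) ℝ) (C2 : Matrix (Fin q) (Fin m) ℝ)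
    (θ : Fin m → ℝ) : Matrix (Fin q) (Fin p) ℂ :=
  (C2.map Complex.ofReal) *
    (-(A0.map Complex.ofReal)
      - ∑ i, Complex.exp (-(θ i) * Complex.I) • (A i).map Complex.ofReal)⁻¹ *
    (B2.map Complex.ofReal)

/-- `Tₐ(λ, r) = −C₂ (A₀^{(22)} + ∑ᵢ Aᵢ^{(22)} e^{−λrᵢ})⁻¹ B₂`. -/
noncomputable def asymTFdelay {m p q : ℕ}
    (A0 : Matrix (Fin m) (Fin m) ℝ) (A : Fin m → Matrix (Fin m) (Fin m) ℝ)
    (B2 : Matrix (Fin m) (Fin p) ℝ) (C2 : Matrix (Fin q) (Fin m) ℝ)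
    (lam : ℂ) (r : Fin m → ℝ) : Matrix (Fin q) (Fin p) ℂ :=
  -((C2.map Complex.ofReal) *
      ((A0.map Complex.ofReal)
        + ∑ i, Complex.exp (-(lam * (r i))) • (A i).map Complex.ofReal)⁻¹ *
    (B2.map Complex.ofReal))

/-
Both sides depend on the data only through `g(z) = σ₁(C₂ (A₀ + ∑ zᵢ Aᵢ)⁻¹ B₂)` on the torus
`|zᵢ| = 1`: `σ₁(𝕋ₐ(θ)) = g(e^{-iθ})` and `σ₁(Tₐ(iω, r)) = g(e^{-iωr})`. The function `g` is
continuous on the compact torus, so its supremum is attained and equals the right-hand side.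
For the left-hand side, no rational independence is needed: given a target `θ` and a
neighbourhood of `τ`, take one large frequency `ω` and move each `τᵢ` by at most `π/ω` so that
`ω rᵢ ≡ θᵢ (mod 2π)`. Hence every neighbourhood of `τ` already gives the full supremum, and the
function of `ε` is constant.
-/

open Real

namespace Matrix

theorem inv_neg' {n α : Type*} [Fintype n] [DecidableEq n] [CommRing α] (M : Matrix n n α) :
    (-M)⁻¹ = -M⁻¹ := by
  by_cases h : IsUnit M.det
  · exact inv_eq_left_inv (by simp [nonsing_inv_mul _ h])
  · have h' : ¬ IsUnit (-M).det := by
      rw [det_neg]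
      exact fun hu => h (IsUnit.mul_iff.mp hu).2
    rw [nonsing_inv_apply_not_isUnit _ h', nonsing_inv_apply_not_isUnit _ h, neg_zero]

end Matrix

theorem sigma1_neg {q p : ℕ} (M : Matrix (Fin q) (Fin p) ℂ) : sigma1 (-M) = sigma1 M := by
  simp [sigma1]

theorem continuous_sigma1 {q p : ℕ} : Continuous (sigma1 (q := q) (p := p)) :=
  continuous_norm.comp <| LinearMap.continuous_of_finiteDimensional
    (LinearMap.toContinuousLinearMap.toLinearMap.comp Matrix.toEuclideanLin.toLinearMap :
      Matrix (Fin q) (Fin p) ℂ →ₗ[ℂ] EuclideanSpace ℂ (Fin p) →L[ℂ] EuclideanSpace ℂ (Fin q))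

theorem sSup_image_iSup_eq_sSup_range {α β ι : Type*} [Nonempty α] {h : α → ℝ}
    (hh : BddAbove (Set.range h)) {act : ι → β → α} {U : Set β}
    (hU : ∀ a, ∃ b ∈ U, ∃ i, h (act i b) = h a) :
    sSup ((fun b => ⨆ i, h (act i b)) '' U) = sSup (Set.range h) := by
  obtain ⟨b₀, hb₀, i₀, -⟩ := hU (Classical.arbitrary α)
  have : Nonempty ι := ⟨i₀⟩
  have hle_i : ∀ b i, h (act i b) ≤ sSup (Set.range h) := fun b i => le_csSup hh ⟨_, rfl⟩
  have hle : ∀ b, ⨆ i, h (act i b) ≤ sSup (Set.range h) := fun b => ciSup_le (hle_i b)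
  refine le_antisymm (csSup_le ⟨_, b₀, hb₀, rfl⟩ (Set.forall_mem_image.2 fun b _ => hle b)) ?_
  refine csSup_le (Set.range_nonempty h) (Set.forall_mem_range.2 fun a => ?_)
  obtain ⟨b, hb, i, hi⟩ := hU a
  calc h a = h (act i b) := hi.symm
    _ ≤ ⨆ i, h (act i b) := le_ciSup ⟨_, Set.forall_mem_range.2 (hle_i b)⟩ i
    _ ≤ _ := le_csSup ⟨_, Set.forall_mem_image.2 fun c _ => hle c⟩ ⟨b, hb, rfl⟩

theorem continuousAt_matrix_inv_of_isUnit {n R : Type*} [Fintype n] [DecidableEq n]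
    [NormedCommRing R] [HasSummableGeomSeries R] {M : Matrix n n R} (h : IsUnit M) :
    ContinuousAt Inv.inv M := by
  refine continuousAt_matrix_inv M ?_
  obtain ⟨u, hu⟩ := (Matrix.isUnit_iff_isUnit_det M).mp h
  exact hu ▸ NormedRing.inverse_continuousAt u

noncomputable def expNegI {m : ℕ} (θ : Fin m → ℝ) : Fin m → ℂ :=
  fun i => Complex.exp (-(θ i) * Complex.I)

theorem norm_expNegI_apply {m : ℕ} (θ : Fin m → ℝ) (i : Fin m) : ‖expNegI θ i‖ = 1 := by
  simpa [expNegI, neg_mul] using Complex.norm_exp_ofReal_mul_I (-θ i)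

@[fun_prop]
theorem continuous_expNegI {m : ℕ} : Continuous (expNegI (m := m)) := by
  unfold expNegI
  fun_prop

theorem expNegI_sub_zsmul_two_pi {m : ℕ} (θ : Fin m → ℝ) (n : Fin m → ℤ) :
    expNegI (fun i => θ i - n i • (2 * π)) = expNegI θ := by
  funext i
  simp only [expNegI, zsmul_eq_mul]
  push_cast
  rw [show -(↑(θ i) - ↑(n i) * (2 * ↑π)) * I = -↑(θ i) * I + n i * (2 * π * I) by ring,
    Complex.exp_add, exp_int_mul_two_pi_mul_I, mul_one]

theorem exists_mem_Icc_expNegI_eq {m : ℕ} (θ : Fin m → ℝ) :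
    ∃ θ' ∈ Set.Icc (0 : Fin m → ℝ) (fun _ => 2 * π), expNegI θ' = expNegI θ := by
  refine ⟨fun i => toIcoMod two_pi_pos 0 (θ i), ⟨fun i => ?_, fun i => ?_⟩, ?_⟩
  · exact (toIcoMod_mem_Ico' two_pi_pos (θ i)).1
  · exact (toIcoMod_mem_Ico' two_pi_pos (θ i)).2.le
  · simp_rw [← self_sub_toIcoDiv_zsmul]
    exact expNegI_sub_zsmul_two_pi θ _

theorem image_Icc_comp_expNegI_eq_range {m : ℕ} {β : Type*} (g : (Fin m → ℂ) → β) :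
    (g ∘ expNegI) '' Set.Icc 0 (fun _ => 2 * π) = Set.range (g ∘ expNegI) := by
  refine (Set.image_subset_range _ _).antisymm ?_
  rintro _ ⟨θ, rfl⟩
  obtain ⟨θ', hθ', he⟩ := exists_mem_Icc_expNegI_eq θ
  exact ⟨θ', hθ', by simp [he]⟩

theorem exists_expNegI_smul_eq_of_abs_sub_le {m : ℕ} (θ τ : Fin m → ℝ) {ω : ℝ} (hω : 0 < ω) :
    ∃ r : Fin m → ℝ, expNegI (ω • r) = expNegI θ ∧ ∀ i, |r i - τ i| ≤ π / ω := by
  set s : Fin m → ℝ := fun i => toIcoMod two_pi_pos (-π) (θ i - ω * τ i)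
  refine ⟨fun i => τ i + s i / ω, ?_, fun i => ?_⟩
  · have : ω • (fun i => τ i + s i / ω) =
        fun i => θ i - toIcoDiv two_pi_pos (-π) (θ i - ω * τ i) • (2 * π) := by
      funext i
      simp only [s, Pi.smul_apply, smul_eq_mul, ← self_sub_toIcoDiv_zsmul]
      field_simp
      ring
    rw [this, expNegI_sub_zsmul_two_pi]
  · have hs := toIcoMod_mem_Ico two_pi_pos (-π) (θ i - ω * τ i)
    rw [add_sub_cancel_left, abs_div, abs_of_pos hω]
    gcongr
    exact abs_le.2 ⟨hs.1, by linarith [hs.2]⟩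

theorem exists_mem_expNegI_smul_eq {m : ℕ} {τ : Fin m → ℝ} {U : Set (Fin m → ℝ)}
    (hU : U ∈ 𝓝 τ) (θ : Fin m → ℝ) : ∃ r ∈ U, ∃ ω : ℝ, expNegI (ω • r) = expNegI θ := by
  obtain ⟨δ, hδ, hball⟩ := Metric.mem_nhds_iff.mp hU
  obtain ⟨r, hr, hclose⟩ :=
    exists_expNegI_smul_eq_of_abs_sub_le θ τ (show 0 < 2 * π / δ by positivity)
  refine ⟨r, hball ?_, _, hr⟩
  rw [Metric.mem_ball, dist_pi_lt_iff hδ]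
  intro i
  calc dist (r i) (τ i) ≤ π / (2 * π / δ) := hclose i
    _ = δ / 2 := by field_simp
    _ < δ := half_lt_self hδ

section TransferFunction

variable {m p q : ℕ} (A0 : Matrix (Fin m) (Fin m) ℝ) (A : Fin m → Matrix (Fin m) (Fin m) ℝ)
  (B2 : Matrix (Fin m) (Fin p) ℝ) (C2 : Matrix (Fin q) (Fin m) ℝ)

noncomputable def torusGain (z : Fin m → ℂ) : ℝ :=
  sigma1 (C2.map ofReal * (A0.map ofReal + ∑ i, z i • (A i).map ofReal)⁻¹ * B2.map ofReal)

theorem sigma1_asymTF (θ : Fin m → ℝ) :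
    sigma1 (asymTF A0 A B2 C2 θ) = torusGain A0 A B2 C2 (expNegI θ) := by
  rw [asymTF, ← neg_add', Matrix.inv_neg', Matrix.mul_neg, Matrix.neg_mul, sigma1_neg]
  rfl

theorem sigma1_asymTFdelay (ω : ℝ) (r : Fin m → ℝ) :
    sigma1 (asymTFdelay A0 A B2 C2 (ω * I) r) = torusGain A0 A B2 C2 (expNegI (ω • r)) := by
  simp only [asymTFdelay, sigma1_neg, torusGain, expNegI, Pi.smul_apply, smul_eq_mul, ofReal_mul]
  ring_nf

theorem continuous_torusGain_expNegI
    (hinv : ∀ z : Fin m → ℂ, (∀ i, ‖z i‖ = 1) →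
      IsUnit (A0.map ofReal + ∑ i, z i • (A i).map ofReal)) :
    Continuous fun θ => torusGain A0 A B2 C2 (expNegI θ) := by
  have hP : Continuous fun θ => A0.map ofReal + ∑ i, expNegI θ i • (A i).map ofReal := by
    fun_prop
  refine continuous_iff_continuousAt.2 fun θ => ?_
  have hinvAt := continuousAt_matrix_inv_of_isUnit (hinv _ (norm_expNegI_apply θ))
  exact continuous_sigma1.continuousAt.comp
    (((continuous_const.matrix_mul continuous_id).matrix_mul continuous_const).continuousAt.comp
      (hinvAt.comp (f := fun θ => A0.map ofReal + ∑ i, expNegI θ i • (A i).map ofReal)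
        hP.continuousAt))

end TransferFunction

/-- the strong H∞ norm of `Tₐ` at positive delays `τ`, defined as
`lim_{ε→0⁺} sup {‖Tₐ(·,r)‖∞ : r ∈ B(τ,ε) ∩ (ℝ⁺)^m}`, equals
`max_{θ∈[0,2π]^m} σ₁(𝕋ₐ(θ))`; in particular it is independent of `τ`. -/
theorem strong_hinfNorm_asymTF_eq_max_over_torus
    (m p q : ℕ)
    (A0 : Matrix (Fin m) (Fin m) ℝ) (A : Fin m → Matrix (Fin m) (Fin m) ℝ)
    (B2 : Matrix (Fin m) (Fin p) ℝ) (C2 : Matrix (Fin q) (Fin m) ℝ)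
    (hinv : ∀ z : Fin m → ℂ, (∀ i, ‖z i‖ = 1) →
      IsUnit ((A0.map Complex.ofReal) + ∑ i, z i • (A i).map Complex.ofReal))
    (τ : Fin m → ℝ) (hτpos : ∀ i, 0 < τ i) :
    Tendsto
      (fun ε : ℝ => sSup
        ((fun r => ⨆ ω : ℝ, sigma1 (asymTFdelay A0 A B2 C2 (ω * Complex.I) r)) ''
          (Metric.ball τ ε ∩ {r : Fin m → ℝ | ∀ i, 0 < r i})))
      (nhdsWithin 0 (Set.Ioi 0))
      (nhds (sSup ((fun θ => sigma1 (asymTF A0 A B2 C2 θ)) ''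
        Set.Icc (0 : Fin m → ℝ) (fun _ => 2 * Real.pi)))) := by
  simp_rw [sigma1_asymTF, sigma1_asymTFdelay]
  have hrange := image_Icc_comp_expNegI_eq_range (torusGain A0 A B2 C2)
  have hbdd : BddAbove (Set.range (torusGain A0 A B2 C2 ∘ expNegI)) := hrange ▸
    (isCompact_Icc.image (continuous_torusGain_expNegI A0 A B2 C2 hinv)).bddAbove
  have hτ : {r : Fin m → ℝ | ∀ i, 0 < r i} ∈ 𝓝 τ :=
    eventually_all.2 fun i => (continuous_apply i).continuousAt.eventually (lt_mem_nhds (hτpos i))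
  refine tendsto_const_nhds.congr' (eventuallyEq_of_mem self_mem_nhdsWithin fun ε hε => ?_)
  refine (Eq.trans ?_ (sSup_image_iSup_eq_sSup_range hbdd fun θ => ?_).symm)
  · exact congrArg sSup hrange
  · obtain ⟨r, hr, ω, he⟩ :=
      exists_mem_expNegI_smul_eq (Filter.inter_mem (Metric.ball_mem_nhds τ hε) hτ) θ
    exact ⟨r, hr, ω, congrArg (torusGain A0 A B2 C2) he⟩
end

section
/- Let ξ > 0 and let r = (r₁,…,rₘ) be positive delays. Then ξ is a singular value of T(iω, r) = C(iωE − A₀ − ∑ᵢ Aᵢ e^{−iωrᵢ})⁻¹B for some ω ∈ ℝ (for some singular value index k) if and only if λ = iω is a zero of the function λ ↦ det [ [λE − A₀ − ∑ Aᵢ e^{−λrᵢ}, −(1/ξ)BBᵀ]; [(1/ξ)CCᵀ, λEᵀ + A₀ᵀ + ∑ Aᵢᵀ e^{λrᵢ}] ]. -/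
/-!
On the imaginary axis the data are real, so the bottom-right block of the Hamiltonian matrix is
`-Mᴴ`, where `M = iωE - A₀ - ∑ Aᵢ e^{-iωrᵢ}`. Taking the Schur complement of the invertible block
`M` and applying the Weinstein–Aronszajn identity twice turns its determinant into
`(-1)ⁿ |det M|² det (1 - ξ⁻² TᴴT)` with `T = C M⁻¹ B`, which vanishes exactly when `ξ²` is an
eigenvalue of `TᴴT`.
-/

open Matrix Complex

namespace Matrix

variable {K : Type*} [Field K] {n p q : Type*} [Fintype n] [Fintype p] [Fintype q]
  [DecidableEq n] [DecidableEq p] [DecidableEq q]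

theorem exists_mulVec_eq_smul_iff_det_one_sub_inv_smul_eq_zero {G : Matrix p p K} {μ : K}
    (hμ : μ ≠ 0) :
    (∃ v : p → K, v ≠ 0 ∧ G *ᵥ v = μ • v) ↔ (1 - μ⁻¹ • G).det = 0 := by
  rw [← exists_mulVec_eq_zero_iff]
  refine exists_congr fun v => and_congr_right fun _ => ?_
  rw [sub_mulVec, one_mulVec, smul_mulVec, sub_eq_zero, eq_comm, eq_inv_smul_iff₀ hμ]

theorem det_fromBlocks_hamiltonian [StarRing K] {M : Matrix n n K} (hM : IsUnit M)
    (X : Matrix n p K) (Y : Matrix q n K) (a : K) :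
    (fromBlocks M (-a • (X * Xᴴ)) (a • (Yᴴ * Y)) (-Mᴴ)).det =
      (-1) ^ Fintype.card n * M.det * star M.det *
        (1 - (a * a) • ((Y * M⁻¹ * X)ᴴ * (Y * M⁻¹ * X))).det := by
  have := hM.invertible
  set T := Y * M⁻¹ * X
  have hMH : (Mᴴ)⁻¹ * Mᴴ = 1 := nonsing_inv_mul _ (isUnit_det_of_invertible Mᴴ)
  have schur : -Mᴴ - a • (Yᴴ * Y) * M⁻¹ * (-a • (X * Xᴴ)) =
      -((1 - ((a * a) • Yᴴ) * (T * (Xᴴ * (Mᴴ)⁻¹))) * Mᴴ) := by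
    simp only [T, smul_mul, Matrix.mul_smul, sub_mul, Matrix.one_mul, Matrix.mul_assoc, hMH,
      Matrix.mul_one, neg_smul, Matrix.mul_neg]
    module
  have sylvester : (1 - ((a * a) • Yᴴ) * (T * (Xᴴ * (Mᴴ)⁻¹))).det =
      (1 - (a * a) • (Tᴴ * T)).det := by
    have hTH : T * (Xᴴ * (Mᴴ)⁻¹) * ((a * a) • Yᴴ) = ((a * a) • T) * Tᴴ := by
      simp only [T, conjTranspose_mul, conjTranspose_nonsing_inv, Matrix.mul_smul, smul_mul,
        Matrix.mul_assoc]
    rw [det_one_sub_mul_comm, hTH, det_one_sub_mul_comm, Matrix.mul_smul]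
  rw [det_fromBlocks₁₁, invOf_eq_nonsing_inv, schur, det_neg, det_mul, sylvester,
    det_conjTranspose]
  ring

theorem transpose_map_ofReal {m n : Type*} (X : Matrix m n ℝ) :
    (X.map ofReal)ᵀ = (X.map ofReal)ᴴ := by
  rw [← conjTranspose_map _ fun _ => (conj_ofReal _).symm, conjTranspose_eq_transpose_of_trivial,
    transpose_map]

end Matrix

theorem neg_conjTranspose_delay_pencil_imaginary {n ι : Type*} [Fintype ι]
    (E A0 : Matrix n n ℝ) (A : ι → Matrix n n ℝ) (r : ι → ℝ) (ω : ℝ) :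
    -((ω * I) • E.map ofReal - A0.map ofReal - ∑ i, exp (-(ω * I * r i)) • (A i).map ofReal)ᴴ =
      (ω * I) • (E.map ofReal)ᵀ + (A0.map ofReal)ᵀ +
        ∑ i, exp (ω * I * r i) • ((A i).map ofReal)ᵀ := by
  have hstar : ∀ x : ℝ, star (exp (-(ω * I * x))) = exp (ω * I * x) := fun x => by
    rw [star_def, ← exp_conj]
    simp [conj_I]
  simp only [conjTranspose_sub, conjTranspose_smul, conjTranspose_sum, hstar,
    ← transpose_map_ofReal, star_def, map_mul, conj_ofReal, conj_I]
  module

theorem singular_value_iff_hamiltonian_det_zero_general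
    (n p q m : ℕ)
    (E A0 : Matrix (Fin n) (Fin n) ℝ) (A : Fin m → Matrix (Fin n) (Fin n) ℝ)
    (B : Matrix (Fin n) (Fin p) ℝ) (C : Matrix (Fin q) (Fin n) ℝ)
    (r : Fin m → ℝ) (ξ : ℝ) (hξ : 0 < ξ) (ω : ℝ)
    (hinv : IsUnit ((ω * Complex.I) • E.map Complex.ofReal
      - A0.map Complex.ofReal
      - ∑ i, Complex.exp (-(ω * Complex.I * (r i))) • (A i).map Complex.ofReal)) :
    (∃ v : Fin p → ℂ, v ≠ 0 ∧
      (((C.map Complex.ofReal) *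
          ((ω * Complex.I) • E.map Complex.ofReal - A0.map Complex.ofReal
            - ∑ i, Complex.exp (-(ω * Complex.I * (r i))) •
                (A i).map Complex.ofReal)⁻¹ *
          (B.map Complex.ofReal))ᴴ *
        ((C.map Complex.ofReal) *
          ((ω * Complex.I) • E.map Complex.ofReal - A0.map Complex.ofReal
            - ∑ i, Complex.exp (-(ω * Complex.I * (r i))) •
                (A i).map Complex.ofReal)⁻¹ *
          (B.map Complex.ofReal))) *ᵥ v = ((ξ : ℂ) ^ 2) • v) ↔
    (Matrix.fromBlocks
        ((ω * Complex.I) • E.map Complex.ofReal - A0.map Complex.ofReal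
          - ∑ i, Complex.exp (-(ω * Complex.I * (r i))) •
              (A i).map Complex.ofReal)
        (-((1 / ξ : ℝ) : ℂ) • ((B.map Complex.ofReal) * (B.map Complex.ofReal)ᵀ))
        (((1 / ξ : ℝ) : ℂ) • ((C.map Complex.ofReal)ᵀ * (C.map Complex.ofReal)))
        ((ω * Complex.I) • (E.map Complex.ofReal)ᵀ + (A0.map Complex.ofReal)ᵀ
          + ∑ i, Complex.exp (ω * Complex.I * (r i)) •
              ((A i).map Complex.ofReal)ᵀ)).det = 0 := by
  have hξ2 : (ξ : ℂ) ^ 2 ≠ 0 := pow_ne_zero _ (ofReal_ne_zero.mpr hξ.ne')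
  have hdet : (Matrix.det _ : ℂ) ≠ 0 := (isUnit_iff_isUnit_det _).mp hinv |>.ne_zero
  have hscale : ((1 / ξ : ℝ) : ℂ) * ((1 / ξ : ℝ) : ℂ) = ((ξ : ℂ) ^ 2)⁻¹ := by push_cast; ring
  rw [exists_mulVec_eq_smul_iff_det_one_sub_inv_smul_eq_zero hξ2, transpose_map_ofReal B,
    transpose_map_ofReal C, ← neg_conjTranspose_delay_pencil_imaginary,
    det_fromBlocks_hamiltonian hinv, hscale]
  simp [hdet]

/-- Hamiltonian characterization of singular value crossings:
given positive delays `r` and `ξ > 0`, and given that the resolvent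
`iωE − A₀ − ∑ Aᵢe^{−iωrᵢ}` is invertible, `ξ` is a singular value of
`T(iω, r) = C(iωE − A₀ − ∑ᵢ Aᵢ e^{−iωrᵢ})⁻¹B` if and only if `λ = iω` is a
zero of `λ ↦ det [[λE − A₀ − ∑ Aᵢe^{−λrᵢ}, −(1/ξ)BBᵀ];
[(1/ξ)CᵀC, λEᵀ + A₀ᵀ + ∑ Aᵢᵀ e^{λrᵢ}]]`. -/
theorem singular_value_iff_hamiltonian_det_zero
    (n p q m : ℕ)
    (E A0 : Matrix (Fin n) (Fin n) ℝ) (A : Fin m → Matrix (Fin n) (Fin n) ℝ)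
    (B : Matrix (Fin n) (Fin p) ℝ) (C : Matrix (Fin q) (Fin n) ℝ)
    (r : Fin m → ℝ) (hr : ∀ i, 0 < r i) (ξ : ℝ) (hξ : 0 < ξ) (ω : ℝ)
    (hinv : IsUnit ((ω * Complex.I) • E.map Complex.ofReal
      - A0.map Complex.ofReal
      - ∑ i, Complex.exp (-(ω * Complex.I * (r i))) • (A i).map Complex.ofReal)) :
    (∃ v : Fin p → ℂ, v ≠ 0 ∧
      (((C.map Complex.ofReal) *
          ((ω * Complex.I) • E.map Complex.ofReal - A0.map Complex.ofReal
            - ∑ i, Complex.exp (-(ω * Complex.I * (r i))) •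
                (A i).map Complex.ofReal)⁻¹ *
          (B.map Complex.ofReal))ᴴ *
        ((C.map Complex.ofReal) *
          ((ω * Complex.I) • E.map Complex.ofReal - A0.map Complex.ofReal
            - ∑ i, Complex.exp (-(ω * Complex.I * (r i))) •
                (A i).map Complex.ofReal)⁻¹ *
          (B.map Complex.ofReal))) *ᵥ v = ((ξ : ℂ) ^ 2) • v) ↔
    (Matrix.fromBlocks
        ((ω * Complex.I) • E.map Complex.ofReal - A0.map Complex.ofReal
          - ∑ i, Complex.exp (-(ω * Complex.I * (r i))) •
              (A i).map Complex.ofReal)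
        (-((1 / ξ : ℝ) : ℂ) • ((B.map Complex.ofReal) * (B.map Complex.ofReal)ᵀ))
        (((1 / ξ : ℝ) : ℂ) • ((C.map Complex.ofReal)ᵀ * (C.map Complex.ofReal)))
        ((ω * Complex.I) • (E.map Complex.ofReal)ᵀ + (A0.map Complex.ofReal)ᵀ
          + ∑ i, Complex.exp (ω * Complex.I * (r i)) •
              ((A i).map Complex.ofReal)ᵀ)).det = 0 :=
  singular_value_iff_hamiltonian_det_zero_general n p q m E A0 A B C r ξ hξ ω hinv
end
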